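/- arXiv:1012.1737 — 4 statements merged into one kernel-verified Lean document; each statement's English description precedes it below -/
import Mathlib

section
/- For every integer N ≥ 2 and every binary string s⃗ = (s₁,…,s_N) ∈ {0,1}^N, the quantity β(s⃗) = ∑_{a⃗ ∈ {-1,1}^N} √2 · cos(π/4 · (N + 1 − ∑ⱼ aⱼ)) · ∏ₗ aₗ^{sₗ} equals 2^{(N+1)/2} · cos(π/4 · (1 + N − 2s)), where s = ∑ₖ sₖ. In particular, β(s⃗) depends only on s and N. -/
open Real Finset

lemma cos_quarter_add (x : ℝ) :
    Real.cos (x - Real.pi / 4) + Real.cos (x + Real.pi / 4) = Real.sqrt 2 * Real.cos x := by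
  rw [Real.cos_sub, Real.cos_add, Real.cos_pi_div_four, Real.sin_pi_div_four]
  ring

lemma cos_quarter_sub (x : ℝ) :
    Real.cos (x - Real.pi / 4) - Real.cos (x + Real.pi / 4) =
      Real.sqrt 2 * Real.sin x := by
  rw [Real.cos_sub, Real.cos_add, Real.cos_pi_div_four, Real.sin_pi_div_four]
  ring

lemma mabk_aux (N : ℕ) (c : ℝ) (s : Fin N → Bool) :
    ∑ a : Fin N → Bool,
      Real.cos (Real.pi / 4 * (c - ∑ j, (if a j then (1 : ℝ) else -1))) *
        ∏ l, (if a l then (1 : ℝ) else -1) ^ (if s l then 1 else 0)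
    = (Real.sqrt 2) ^ N *
        Real.cos (Real.pi / 4 * (c - 2 * ∑ l, (if s l then (1 : ℝ) else 0))) := by
  induction N generalizing c with
  | zero => simp
  | succ N ih =>
    rw [← Equiv.sum_comp (Fin.consEquiv fun _ : Fin (N+1) => Bool)]
    rw [Fintype.sum_prod_type]
    have key : ∀ b : Bool,
        ∑ g : Fin N → Bool,
          Real.cos (Real.pi / 4 * (c - ∑ j, (if (Fin.cons b g : Fin (N+1) → Bool) j then (1 : ℝ) else -1))) *
            ∏ l, (if (Fin.cons b g : Fin (N+1) → Bool) l then (1 : ℝ) else -1) ^ (if s l then 1 else 0)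
        = (if b then (1:ℝ) else -1) ^ (if s 0 then 1 else 0) * ((Real.sqrt 2) ^ N *
            Real.cos (Real.pi / 4 * ((c - (if b then (1:ℝ) else -1)) - 2 * ∑ l : Fin N, (if s l.succ then (1 : ℝ) else 0)))) := by
      intro b
      rw [← ih (c - (if b then (1:ℝ) else -1)) (fun l => s l.succ), Finset.mul_sum]
      apply Finset.sum_congr rfl
      intro g _
      rw [Fin.sum_univ_succ, Fin.prod_univ_succ]
      simp only [Fin.cons_zero, Fin.cons_succ, sub_add_eq_sub_sub]
      ring
    have hc : ∀ (b : Bool) (g : Fin N → Bool),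
        ((Fin.consEquiv fun _ => Bool) (b, g) : Fin (N+1) → Bool) = Fin.cons b g := fun _ _ => rfl
    simp only [hc, key]
    rw [Fintype.sum_bool]
    set S : ℝ := ∑ l : Fin N, (if s l.succ then (1 : ℝ) else 0) with hS
    have hsum : ∑ l, (if s l then (1:ℝ) else 0) = (if s 0 then (1:ℝ) else 0) + S := by
      rw [Fin.sum_univ_succ]
    rw [hsum]
    have h2 : Real.sqrt 2 ^ (N+1) = Real.sqrt 2 * Real.sqrt 2 ^ N := by ring
    rw [h2]
    cases hs0 : s 0 with
    | false =>
      simp only [Bool.false_eq_true, if_false, if_true, pow_zero, pow_one, one_mul]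
      have e1 : Real.pi / 4 * (c - 1 - 2 * S) = Real.pi / 4 * (c - 2 * (0 + S)) - Real.pi / 4 := by
        ring
      have e2 : Real.pi / 4 * (c - -1 - 2 * S) = Real.pi / 4 * (c - 2 * (0 + S)) + Real.pi / 4 := by
        ring
      rw [e1, e2]
      linear_combination (Real.sqrt 2 ^ N) * cos_quarter_add (Real.pi / 4 * (c - 2 * (0 + S)))
    | true =>
      simp only [Bool.false_eq_true, if_false, if_true, pow_zero, pow_one, one_mul]
      have e1 : Real.pi / 4 * (c - 1 - 2 * S) = Real.pi / 4 * (c - 2 * S) - Real.pi / 4 := by ring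
      have e2 : Real.pi / 4 * (c - -1 - 2 * S) = Real.pi / 4 * (c - 2 * S) + Real.pi / 4 := by ring
      have e3 : Real.pi / 4 * (c - 2 * (1 + S)) = Real.pi / 4 * (c - 2 * S) - Real.pi / 2 := by ring
      rw [e1, e2, e3, Real.cos_sub_pi_div_two]
      linear_combination (Real.sqrt 2 ^ N) * cos_quarter_sub (Real.pi / 4 * (c - 2 * S))

/-- The MABK coefficient `β(s⃗)` for `N` parties, where the settings string `s⃗`
is encoded as a function `Fin N → Bool` (with `true ↦ 1`, `false ↦ 0`) and the
sum runs over all `a⃗ ∈ {-1,1}^N` (encoded as `Fin N → Bool`, `true ↦ 1`, `false ↦ -1`). -/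
noncomputable def mabkBeta (N : ℕ) (s : Fin N → Bool) : ℝ :=
  ∑ a : Fin N → Bool,
    Real.sqrt 2 *
      Real.cos (Real.pi / 4 *
        ((N : ℝ) + 1 - ∑ j, (if a j then (1 : ℝ) else -1))) *
      ∏ l, (if a l then (1 : ℝ) else -1) ^ (if s l then 1 else 0)

theorem mabkBeta_closed_form (N : ℕ) (hN : 2 ≤ N) (s : Fin N → Bool) :
    mabkBeta N s =
      (2 : ℝ) ^ (((N : ℝ) + 1) / 2) *
        Real.cos (Real.pi / 4 *
          (1 + (N : ℝ) - 2 * ∑ l, (if s l then (1 : ℝ) else 0))) := by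
  have h := mabk_aux N ((N : ℝ) + 1) s
  have hβ : mabkBeta N s = Real.sqrt 2 * ∑ a : Fin N → Bool,
      Real.cos (Real.pi / 4 * (((N : ℝ) + 1) - ∑ j, (if a j then (1 : ℝ) else -1))) *
        ∏ l, (if a l then (1 : ℝ) else -1) ^ (if s l then 1 else 0) := by
    rw [mabkBeta, Finset.mul_sum]
    exact Finset.sum_congr rfl fun a _ => by ring
  rw [hβ, h, ← mul_assoc]
  have hpow : Real.sqrt 2 * Real.sqrt 2 ^ N = (2 : ℝ) ^ (((N : ℝ) + 1) / 2) := by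
    have : Real.sqrt 2 * Real.sqrt 2 ^ N = Real.sqrt 2 ^ (N + 1) := by ring
    rw [this, Real.sqrt_eq_rpow, ← Real.rpow_natCast ((2:ℝ) ^ ((1:ℝ)/2)) (N + 1),
      ← Real.rpow_mul (by norm_num : (0:ℝ) ≤ 2)]
    congr 1
    push_cast
    ring
  rw [hpow]
  congr 1
  ring
end

section
/- For every integer N ≥ 2 and every real χ, max( 2^{(3N−1)/2}·|sin(χ + (N−1)·π/4)|, 2^{(3N−1)/2}·|sin(χ + (N+1)·π/4)| ) ≥ 2^{3N/2 − 1}. -/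
open Real

lemma max_sin_cos_abs (θ : ℝ) : Real.sqrt 2 / 2 ≤ max |Real.sin θ| |Real.cos θ| := by
  have h1 : Real.sin θ ^ 2 + Real.cos θ ^ 2 = 1 := Real.sin_sq_add_cos_sq θ
  by_contra h
  push_neg at h
  have hs : |Real.sin θ| < Real.sqrt 2 / 2 := lt_of_le_of_lt (le_max_left _ _) h
  have hc : |Real.cos θ| < Real.sqrt 2 / 2 := lt_of_le_of_lt (le_max_right _ _) h
  have hsq : (Real.sqrt 2 / 2)^2 = 1/2 := by
    rw [div_pow, Real.sq_sqrt (by norm_num : (0:ℝ) ≤ 2)]; norm_num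
  have h2 : Real.sin θ ^ 2 < 1/2 := by
    have := mul_self_lt_mul_self (abs_nonneg (Real.sin θ)) hs
    nlinarith [abs_mul_abs_self (Real.sin θ)]
  have h3 : Real.cos θ ^ 2 < 1/2 := by
    have := mul_self_lt_mul_self (abs_nonneg (Real.cos θ)) hc
    nlinarith [abs_mul_abs_self (Real.cos θ)]
  linarith

theorem mabk_planar_lower_bound (N : ℕ) (hN : 2 ≤ N) (χ : ℝ) :
    (2 : ℝ) ^ (3 * (N : ℝ) / 2 - 1) ≤
      max ((2 : ℝ) ^ ((3 * (N : ℝ) - 1) / 2) *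
            |Real.sin (χ + ((N : ℝ) - 1) * Real.pi / 4)|)
          ((2 : ℝ) ^ ((3 * (N : ℝ) - 1) / 2) *
            |Real.sin (χ + ((N : ℝ) + 1) * Real.pi / 4)|) := by
  set θ := χ + ((N : ℝ) - 1) * Real.pi / 4 with hθ
  have hang : χ + ((N : ℝ) + 1) * Real.pi / 4 = θ + Real.pi / 2 := by
    rw [hθ]; ring
  rw [hang, Real.sin_add_pi_div_two]
  have hpos : (0:ℝ) < (2 : ℝ) ^ ((3 * (N : ℝ) - 1) / 2) :=
    Real.rpow_pos_of_pos (by norm_num) _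
  have hmax : Real.sqrt 2 / 2 ≤ max |Real.sin θ| |Real.cos θ| := max_sin_cos_abs θ
  have key : (2 : ℝ) ^ ((3 * (N : ℝ) - 1) / 2) * (Real.sqrt 2 / 2) =
      (2 : ℝ) ^ (3 * (N : ℝ) / 2 - 1) := by
    have h2 : ((3 * (N:ℝ) - 1)/2 + 1/2 : ℝ) = 3 * (N:ℝ)/2 - 1 + 1 := by ring
    rw [Real.sqrt_eq_rpow, ← mul_div_assoc, ← Real.rpow_add (by norm_num : (0:ℝ) < 2), h2,
      Real.rpow_add (by norm_num : (0:ℝ) < 2), Real.rpow_one, mul_div_cancel_right₀ _ (by norm_num : (2:ℝ) ≠ 0)]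
  calc (2 : ℝ) ^ (3 * (N : ℝ) / 2 - 1)
      = (2 : ℝ) ^ ((3 * (N : ℝ) - 1) / 2) * (Real.sqrt 2 / 2) := key.symm
    _ ≤ (2 : ℝ) ^ ((3 * (N : ℝ) - 1) / 2) * max |Real.sin θ| |Real.cos θ| := by
        exact mul_le_mul_of_nonneg_left hmax hpos.le
    _ = max ((2 : ℝ) ^ ((3 * (N : ℝ) - 1) / 2) * |Real.sin θ|)
          ((2 : ℝ) ^ ((3 * (N : ℝ) - 1) / 2) * |Real.cos θ|) := by
        rw [mul_max_of_nonneg _ _ hpos.le]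
end

section
/- Let ν ∈ [0,1) and N ≥ 3 an integer. If ν < 1 − 2^{1/N}/√2, then for every real χ, (1−ν)^N · max( 2^{(3N−1)/2}·|sin(χ + (N−1)π/4)|, 2^{(3N−1)/2}·|sin(χ + (N+1)π/4)| ) > 2^N. -/
open Real

theorem mabk_noisy_violation (ν : ℝ) (hν0 : 0 ≤ ν) (hν1 : ν < 1) (N : ℕ) (hN : 3 ≤ N)
    (hνc : ν < 1 - (2 : ℝ) ^ ((1 : ℝ) / N) / Real.sqrt 2) (χ : ℝ) :
    (2 : ℝ) ^ (N : ℝ) <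
      (1 - ν) ^ N *
        max ((2 : ℝ) ^ ((3 * (N : ℝ) - 1) / 2) *
              |Real.sin (χ + ((N : ℝ) - 1) * Real.pi / 4)|)
            ((2 : ℝ) ^ ((3 * (N : ℝ) - 1) / 2) *
              |Real.sin (χ + ((N : ℝ) + 1) * Real.pi / 4)|) := by
  have hs2 : (0:ℝ) < Real.sqrt 2 := Real.sqrt_pos.mpr (by norm_num)
  set c : ℝ := (2:ℝ) ^ ((3 * (N : ℝ) - 1) / 2) with hc
  have hcpos : 0 < c := Real.rpow_pos_of_pos two_pos _
  set x := χ + ((N:ℝ) - 1) * Real.pi / 4 with hx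
  have hx2 : χ + ((N:ℝ) + 1) * Real.pi / 4 = x + Real.pi / 2 := by rw [hx]; ring
  rw [hx2, Real.sin_add_pi_div_two]
  -- max of |sin|, |cos| is at least 1/√2
  have hsc : (Real.sqrt 2)⁻¹ ≤ max |Real.sin x| |Real.cos x| := by
    by_contra h
    push_neg at h
    have h1 : |Real.sin x| < (Real.sqrt 2)⁻¹ := lt_of_le_of_lt (le_max_left _ _) h
    have h2 : |Real.cos x| < (Real.sqrt 2)⁻¹ := lt_of_le_of_lt (le_max_right _ _) h
    have hsq : Real.sqrt 2 * Real.sqrt 2 = 2 := Real.mul_self_sqrt (by norm_num)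
    have e1 : |Real.sin x| ^ 2 = Real.sin x ^ 2 := sq_abs _
    have e2 : |Real.cos x| ^ 2 = Real.cos x ^ 2 := sq_abs _
    have hinv : (Real.sqrt 2)⁻¹ ^ 2 = 1/2 := by
      rw [inv_pow]; field_simp; rw [Real.sq_sqrt (by norm_num)]
    have hpyth := Real.sin_sq_add_cos_sq x
    nlinarith [abs_nonneg (Real.sin x), abs_nonneg (Real.cos x),
      sq_nonneg (|Real.sin x| - |Real.cos x|)]
  have hmax : c / Real.sqrt 2 ≤ max (c * |Real.sin x|) (c * |Real.cos x|) := by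
    rw [← mul_max_of_nonneg _ _ hcpos.le]
    rw [div_eq_mul_inv]
    exact mul_le_mul_of_nonneg_left hsc hcpos.le
  -- (1-ν)^N > b^N where b = 2^{1/N}/√2
  set b : ℝ := (2:ℝ) ^ ((1:ℝ)/N) / Real.sqrt 2 with hb
  have hbpos : 0 < b := div_pos (Real.rpow_pos_of_pos two_pos _) hs2
  have hblt : b < 1 - ν := by linarith
  have hpow : b ^ N < (1 - ν) ^ N := by
    apply pow_lt_pow_left₀ hblt hbpos.le
    omega
  have hNne : (N:ℝ) ≠ 0 := by positivity
  -- compute b^N * (c/√2) = 2^N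
  have hbN : b ^ N = 2 / (2:ℝ) ^ ((N:ℝ)/2) := by
    rw [hb, div_pow]
    congr 1
    · rw [← Real.rpow_natCast ((2:ℝ) ^ ((1:ℝ)/N)) N, ← Real.rpow_mul (by norm_num)]
      rw [one_div, inv_mul_cancel₀ hNne, Real.rpow_one]
    · rw [Real.sqrt_eq_rpow,
        ← Real.rpow_natCast ((2:ℝ) ^ ((1:ℝ)/2)) N, ← Real.rpow_mul (by norm_num)]
      congr 1; ring
  have hkey : b ^ N * (c / Real.sqrt 2) = (2:ℝ) ^ (N:ℝ) := by
    rw [hbN, hc, Real.sqrt_eq_rpow, div_mul_div_comm, ← Real.rpow_add two_pos,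
      show (2:ℝ) * (2:ℝ) ^ ((3 * (N:ℝ) - 1) / 2) = (2:ℝ) ^ (1 + (3 * (N:ℝ) - 1) / 2) from by
        rw [Real.rpow_add two_pos, Real.rpow_one],
      ← Real.rpow_sub two_pos]
    congr 1
    ring
  calc (2:ℝ) ^ (N:ℝ) = b ^ N * (c / Real.sqrt 2) := hkey.symm
    _ < (1 - ν) ^ N * (c / Real.sqrt 2) := by
        apply mul_lt_mul_of_pos_right hpow (by positivity)
    _ ≤ (1 - ν) ^ N * max (c * |Real.sin x|) (c * |Real.cos x|) := by
        apply mul_le_mul_of_nonneg_left hmax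
        have : 0 < 1 - ν := lt_trans hbpos hblt
        positivity
end

section
/- Let χ be a uniformly distributed random variable on [0, 2π]. For ε ∈ [0, 1 − 1/√2], the probability that max(|sin(χ + (N−1)π/4)|, |sin(χ + (N+1)π/4)|) ≥ 1 − ε equals (4/π)·arccos(1 − ε). -/
open Real MeasureTheory

open Set in
lemma ind_integral_aux (A : Set ℝ) (hA : MeasurableSet A) {t s : ℝ} (h : t ≤ s) :
    ∫ x in t..s, A.indicator (fun _ => (1:ℝ)) x = (volume (A ∩ Set.Ioc t s)).toReal := by
  rw [intervalIntegral.integral_of_le h, MeasureTheory.integral_indicator hA,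
    setIntegral_const, measureReal_def, Measure.restrict_apply hA, smul_eq_mul, mul_one]

open Set in
lemma aux_volume (c : ℝ) (hc1 : Real.sqrt 2 / 2 ≤ c) (hc2 : c ≤ 1) (a : ℝ) :
    (volume {χ ∈ Icc (0:ℝ) (2*π) | c ≤ max |Real.sin (χ + a)| |Real.cos (χ + a)|}).toReal
      = 8 * Real.arccos c := by
  have hπ := Real.pi_pos
  have hc0 : 0 < c := lt_of_lt_of_le (by positivity) hc1
  set G : Set ℝ := {φ | c ≤ max |Real.sin φ| |Real.cos φ|} with hGdef
  have hG : MeasurableSet G := measurableSet_le measurable_const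
    ((Real.continuous_sin.abs.max Real.continuous_cos.abs).measurable)
  set f : ℝ → ℝ := G.indicator (fun _ => (1:ℝ)) with hfdef
  have hper : Function.Periodic f (π/2) := by
    intro x
    have hmem : x + π/2 ∈ G ↔ x ∈ G := by
      simp only [hGdef, mem_setOf_eq, Real.sin_add_pi_div_two, Real.cos_add_pi_div_two, abs_neg]
      rw [max_comm]
    simp only [hfdef, Set.indicator_apply]
    rw [if_congr hmem rfl rfl]
  have hper2 : Function.Periodic f (2*π) := by
    have h := hper.nat_mul 4
    have h4 : ((4:ℕ):ℝ) * (π/2) = 2*π := by push_cast; ring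
    rwa [h4] at h
  have hint : ∀ t s : ℝ, IntervalIntegrable f volume t s := by
    intro t s
    rw [intervalIntegrable_iff]
    exact (integrableOn_const (by rw [Set.uIoc]; exact measure_Ioc_lt_top.ne)).indicator hG
  have harcsin : Real.arcsin c = π/2 - Real.arccos c := by
    rw [Real.arccos_eq_pi_div_two_sub_arcsin]; ring
  have hAle : Real.arccos c ≤ Real.arcsin c := by
    have h1 : Real.arccos c ≤ π/4 := Real.arccos_le_pi_div_four.mpr hc1
    rw [harcsin]; linarith
  have hA0 : 0 ≤ Real.arccos c := Real.arccos_nonneg c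
  have hBle : Real.arcsin c ≤ π/2 := Real.arcsin_le_pi_div_two c
  have hkey : G ∩ Ioc 0 (π/2) = Ioc 0 (Real.arccos c) ∪ Icc (Real.arcsin c) (π/2) := by
    ext φ
    simp only [hGdef, mem_inter_iff, mem_setOf_eq, mem_Ioc, mem_union, mem_Icc]
    constructor
    · rintro ⟨hmax, h0, hphi⟩
      have hs : 0 ≤ Real.sin φ := Real.sin_nonneg_of_nonneg_of_le_pi h0.le (by linarith)
      have hco : 0 ≤ Real.cos φ := Real.cos_nonneg_of_mem_Icc ⟨by linarith, hphi⟩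
      rw [abs_of_nonneg hs, abs_of_nonneg hco] at hmax
      rcases le_max_iff.mp hmax with h | h
      · exact Or.inr ⟨(Real.arcsin_le_iff_le_sin ⟨by linarith, hc2⟩
          ⟨by linarith, hphi⟩).mpr h, hphi⟩
      · refine Or.inl ⟨h0, ?_⟩
        rw [← Real.sin_pi_div_two_sub] at h
        have h2 : Real.arcsin c ≤ π/2 - φ := (Real.arcsin_le_iff_le_sin ⟨by linarith, hc2⟩
          ⟨by linarith, by linarith⟩).mpr h
        rw [Real.arccos_eq_pi_div_two_sub_arcsin]; linarith
    · rintro (⟨h0, hA⟩ | ⟨hB, hphi⟩)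
      · have hphi : φ ≤ π/2 := le_trans hA (by linarith)
        have hcos : Real.cos (Real.arccos c) ≤ Real.cos φ :=
          Real.cos_le_cos_of_nonneg_of_le_pi h0.le (Real.arccos_le_pi c) hA
        rw [Real.cos_arccos (by linarith) hc2] at hcos
        exact ⟨le_max_iff.mpr (Or.inr (hcos.trans (le_abs_self _))), h0, hphi⟩
      · have h0 : 0 < φ := lt_of_lt_of_le (Real.arcsin_pos.mpr hc0) hB
        have hsin : c ≤ Real.sin φ := (Real.arcsin_le_iff_le_sin ⟨by linarith, hc2⟩
          ⟨by linarith, hphi⟩).mp hB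
        exact ⟨le_max_iff.mpr (Or.inl (hsin.trans (le_abs_self _))), h0, hphi⟩
  have hq : volume (G ∩ Ioc 0 (π/2)) = ENNReal.ofReal (2 * Real.arccos c) := by
    rw [hkey]
    have hd : volume (Ioc (0:ℝ) (Real.arccos c) ∩ Icc (Real.arcsin c) (π/2)) = 0 := by
      refine measure_mono_null ?_ (measure_singleton (Real.arcsin c))
      rintro x ⟨⟨_, hxA⟩, hBx, _⟩
      have hx : x = Real.arcsin c := le_antisymm (hxA.trans hAle) hBx
      simp [hx]
    rw [measure_union₀ measurableSet_Icc.nullMeasurableSet hd, Real.volume_Ioc, Real.volume_Icc,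
      sub_zero, ← ENNReal.ofReal_add hA0 (by linarith)]
    congr 1
    rw [harcsin]; ring
  have hquarter : ∀ t : ℝ, ∫ x in t..(t + π/2), f x = 2 * Real.arccos c := by
    intro t
    have h0 : ∫ x in (0:ℝ)..(0 + π/2), f x = 2 * Real.arccos c := by
      rw [zero_add, hfdef, ind_integral_aux G hG (by positivity), hq,
        ENNReal.toReal_ofReal (by linarith)]
    calc ∫ x in t..(t + π/2), f x = ∫ x in (0:ℝ)..(0 + π/2), f x :=
          hper.intervalIntegral_add_eq t 0
      _ = 2 * Real.arccos c := h0
  have hfull : ∫ x in (0:ℝ)..(2*π), f x = 8 * Real.arccos c := by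
    have e1 : ∫ x in (0:ℝ)..(π/2), f x = 2 * Real.arccos c := by
      have h := hquarter 0; rwa [zero_add] at h
    have e2 : ∫ x in (π/2:ℝ)..π, f x = 2 * Real.arccos c := by
      have h := hquarter (π/2); rwa [(by ring : π/2 + π/2 = π)] at h
    have e3 : ∫ x in (π:ℝ)..(3*π/2), f x = 2 * Real.arccos c := by
      have h := hquarter π; rwa [(by ring : π + π/2 = 3*π/2)] at h
    have e4 : ∫ x in (3*π/2:ℝ)..(2*π), f x = 2 * Real.arccos c := by
      have h := hquarter (3*π/2); rwa [(by ring : 3*π/2 + π/2 = 2*π)] at h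
    have s1 := intervalIntegral.integral_add_adjacent_intervals (hint 0 (π/2)) (hint (π/2) π)
    have s2 := intervalIntegral.integral_add_adjacent_intervals (hint 0 π) (hint π (3*π/2))
    have s3 := intervalIntegral.integral_add_adjacent_intervals (hint 0 (3*π/2)) (hint (3*π/2) (2*π))
    linarith
  set P : Set ℝ := (fun χ => χ + a) ⁻¹' G with hPdef
  have hP : MeasurableSet P := hG.preimage (measurable_add_const a)
  have hS : {χ ∈ Icc (0:ℝ) (2*π) | c ≤ max |Real.sin (χ + a)| |Real.cos (χ + a)|}
      = P ∩ Icc 0 (2*π) := by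
    ext χ
    simp only [hPdef, hGdef, mem_setOf_eq, mem_inter_iff, mem_preimage]
    tauto
  have hIoc : volume (P ∩ Icc (0:ℝ) (2*π)) = volume (P ∩ Ioc (0:ℝ) (2*π)) := by
    apply le_antisymm
    · calc volume (P ∩ Icc (0:ℝ) (2*π)) ≤ volume ((P ∩ Ioc (0:ℝ) (2*π)) ∪ {0}) := by
            apply measure_mono
            rintro x ⟨hx, h0, h2⟩
            rcases eq_or_lt_of_le h0 with h | h
            · right; simp [← h]
            · left; exact ⟨hx, h, h2⟩
        _ ≤ volume (P ∩ Ioc (0:ℝ) (2*π)) + volume ({0} : Set ℝ) := measure_union_le _ _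
        _ = volume (P ∩ Ioc (0:ℝ) (2*π)) := by simp
    · exact measure_mono (inter_subset_inter_right _ Ioc_subset_Icc_self)
  have hPind : ∀ x : ℝ, P.indicator (fun _ => (1:ℝ)) x = f (x + a) := by
    intro x
    rfl
  calc (volume {χ ∈ Icc (0:ℝ) (2*π) | c ≤ max |Real.sin (χ + a)| |Real.cos (χ + a)|}).toReal
      = (volume (P ∩ Ioc (0:ℝ) (2*π))).toReal := by rw [hS, hIoc]
    _ = ∫ x in (0:ℝ)..(2*π), P.indicator (fun _ => (1:ℝ)) x :=
        (ind_integral_aux P hP (by positivity)).symm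
    _ = ∫ x in (0:ℝ)..(2*π), f (x + a) := intervalIntegral.integral_congr (fun x _ => hPind x)
    _ = ∫ x in (0+a)..(2*π+a), f x := intervalIntegral.integral_comp_add_right f a
    _ = ∫ x in a..(a+2*π), f x := by rw [zero_add, add_comm (2*π) a]
    _ = ∫ x in (0:ℝ)..(0+2*π), f x := hper2.intervalIntegral_add_eq a 0
    _ = 8 * Real.arccos c := by rw [zero_add]; exact hfull

theorem prob_near_max_violation (N : ℕ) (hN : 2 ≤ N) (ε : ℝ)
    (hε : ε ∈ Set.Icc (0 : ℝ) (1 - 1 / Real.sqrt 2)) :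
    (MeasureTheory.volume {χ ∈ Set.Icc (0 : ℝ) (2 * Real.pi) |
        1 - ε ≤ max |Real.sin (χ + ((N : ℝ) - 1) * Real.pi / 4)|
                    |Real.sin (χ + ((N : ℝ) + 1) * Real.pi / 4)|}).toReal / (2 * Real.pi)
      = (4 / Real.pi) * Real.arccos (1 - ε) := by
  obtain ⟨hε0, hε1⟩ := hε
  have h2 : Real.sqrt 2 * Real.sqrt 2 = 2 := Real.mul_self_sqrt (by norm_num)
  have hsq : 1 / Real.sqrt 2 = Real.sqrt 2 / 2 := by
    rw [div_eq_div_iff (by positivity) (by norm_num), one_mul, h2]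
  have hset : {χ ∈ Set.Icc (0 : ℝ) (2 * Real.pi) |
        1 - ε ≤ max |Real.sin (χ + ((N : ℝ) - 1) * Real.pi / 4)|
                    |Real.sin (χ + ((N : ℝ) + 1) * Real.pi / 4)|}
      = {χ ∈ Set.Icc (0:ℝ) (2*π) |
          1 - ε ≤ max |Real.sin (χ + ((N : ℝ) - 1) * Real.pi / 4)|
                      |Real.cos (χ + ((N : ℝ) - 1) * Real.pi / 4)|} := by
    ext χ
    have h : χ + ((N : ℝ) + 1) * Real.pi / 4 = (χ + ((N : ℝ) - 1) * Real.pi / 4) + π/2 := by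
      ring
    simp only [Set.mem_setOf_eq, h, Real.sin_add_pi_div_two]
  rw [hset, aux_volume (1 - ε) (by linarith [hsq]) (by linarith) _]
  have hπ : Real.pi ≠ 0 := Real.pi_ne_zero
  field_simp
  ring
end
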